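/- arXiv:2202.00313 — 2 statements merged into one kernel-verified Lean document; each statement's English description precedes it below -/
import Mathlib

section
/- Let f be a strongly positive symplectic twist map of 𝕋^d×ℝ^d with generating function S, let G ∈ C²(𝕋^d), let f_ε be the symplectic twist map with generating function S_ε(q,Q) := S(q,Q) + εG(q), and let (F_ε)_{ε∈ℝ} be a continuous family of lifts of f_ε. Fix (m,n) ∈ ℤ^d×ℕ* with m and n coprime. Then the set J*_{(m,n)} := {ε ∈ ℝ : there exists a Lipschitz ℤ^d-periodic map γ: ℝ^d → ℝ^d such that for all q ∈ ℝ^d, π₁∘F_ε^n(q,γ(q)) = q+m and det(∂_p(π₁∘F_ε^n)(q,γ(q))) ≠ 0} is an open subset of ℝ. -/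
open Function Set Filter Topology MeasureTheory

noncomputable section

/-- `ℝ^d` with the Euclidean structure. -/
abbrev Ed (d : ℕ) := EuclideanSpace ℝ (Fin d)
/-- `ℂ^d`. -/
abbrev Cd (d : ℕ) := EuclideanSpace ℂ (Fin d)

variable {d : ℕ}

/-- The real vector associated with an integer vector `m ∈ ℤ^d`. -/
def intVec (d : ℕ) (m : Fin d → ℤ) : Ed d := WithLp.toLp 2 fun i => (m i : ℝ)

/-- The complex vector associated with an integer vector `m ∈ ℤ^d`. -/
def intVecC (d : ℕ) (m : Fin d → ℤ) : Cd d := WithLp.toLp 2 fun i => (m i : ℂ)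

/-- The canonical embedding `ℝ^d → ℂ^d`. -/
def complexify (q : Ed d) : Cd d := WithLp.toLp 2 fun i => (q i : ℂ)

/-- The standard pairing `⟨p, v⟩ = ∑ i, p i * v i` on `ℝ^d`. -/
def pairing (p v : Ed d) : ℝ := ∑ i, p i * v i

/-- The standard bilinear pairing on `ℂ^d`. -/
def pairingC (p v : Cd d) : ℂ := ∑ i, p i * v i

/-- `g` is a `C¹` diffeomorphism. -/
def IsC1Diffeo {X Y : Type*} [NormedAddCommGroup X] [NormedSpace ℝ X]
    [NormedAddCommGroup Y] [NormedSpace ℝ Y] (g : X → Y) : Prop :=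
  ContDiff ℝ 1 g ∧ ∃ ginv : Y → X, ContDiff ℝ 1 ginv ∧
    Function.LeftInverse ginv g ∧ Function.RightInverse ginv g

/-- `g` is a holomorphic diffeomorphism. -/
def IsHolDiffeo {X Y : Type*} [NormedAddCommGroup X] [NormedSpace ℂ X]
    [NormedAddCommGroup Y] [NormedSpace ℂ Y] (g : X → Y) : Prop :=
  Differentiable ℂ g ∧ ∃ ginv : Y → X, Differentiable ℂ ginv ∧
    Function.LeftInverse ginv g ∧ Function.RightInverse ginv g

/-- `F(q+m, p) = F(q, p) + (m, 0)` for all `m ∈ ℤ^d`: `F` is the lift of a map of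
`𝕋^d × ℝ^d`. -/
def IsZdLift (F : Ed d × Ed d → Ed d × Ed d) : Prop :=
  ∀ (m : Fin d → ℤ) (q p : Ed d),
    F (q + intVec d m, p) = ((F (q, p)).1 + intVec d m, (F (q, p)).2)

/-- `S` is a generating function for the lift `F`, i.e. `S(q+m, Q+m) = S(q, Q)` and
`P dQ - p dq = dS(q, Q)`; the latter means `∂₁S(q, Q(q,p)) = -p` and
`∂₂S(q, Q(q,p)) = P(q,p)`. -/
structure IsGenFun (F : Ed d × Ed d → Ed d × Ed d) (S : Ed d × Ed d → ℝ) : Prop where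
  periodic : ∀ (m : Fin d → ℤ) (q Q : Ed d), S (q + intVec d m, Q + intVec d m) = S (q, Q)
  dq : ∀ q p v : Ed d, fderiv ℝ (fun q' => S (q', (F (q, p)).1)) q v = -(pairing p v)
  dQ : ∀ q p v : Ed d, fderiv ℝ (fun Q' => S (q, Q')) (F (q, p)).1 v = pairing (F (q, p)).2 v

/-- `F : ℝ^d × ℝ^d → ℝ^d × ℝ^d` is a lift of a symplectic twist map of `𝕋^d × ℝ^d`
with generating function `S`. -/
structure IsSymplecticTwistLift (F : Ed d × Ed d → Ed d × Ed d)
    (S : Ed d × Ed d → ℝ) : Prop where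
  diffeo : IsC1Diffeo F
  lift : IsZdLift F
  twist : IsC1Diffeo (fun x : Ed d × Ed d => (x.1, (F x).1))
  genfun : IsGenFun F S

/-- The mixed second derivative `∂²_{qQ} S (q,Q) (v, v)`. -/
def mixedS (S : Ed d × Ed d → ℝ) (q Q v : Ed d) : ℝ :=
  fderiv ℝ (fun Q' => fderiv ℝ (fun q' => S (q', Q')) q v) Q v

/-- The symplectic twist map with `C²` generating function `S` is positive. -/
def PositiveGenFun (S : Ed d × Ed d → ℝ) : Prop :=
  ContDiff ℝ 2 S ∧ ∃ α : ℝ, 0 < α ∧ ∀ q Q v : Ed d, mixedS S q Q v ≤ -α * ‖v‖ ^ 2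

/-- The symplectic twist map with `C²` generating function `S` is strongly positive. -/
def StronglyPositiveGenFun (S : Ed d × Ed d → ℝ) : Prop :=
  ContDiff ℝ 2 S ∧ ∃ α β : ℝ, 0 < α ∧ 0 < β ∧
    ∀ q Q v : Ed d, -β * ‖v‖ ^ 2 ≤ mixedS S q Q v ∧ mixedS S q Q v ≤ -α * ‖v‖ ^ 2

/-- The second derivative `∂²_{qq} S (q, Q)` as a continuous bilinear map. -/
def hessqq (S : Ed d × Ed d → ℝ) (q Q : Ed d) : Ed d →L[ℝ] Ed d →L[ℝ] ℝ :=
  fderiv ℝ (fun q' => fderiv ℝ (fun q'' => S (q'', Q)) q') q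

/-- The second derivative `∂²_{QQ} S (q, Q)` as a continuous bilinear map. -/
def hessQQ (S : Ed d × Ed d → ℝ) (q Q : Ed d) : Ed d →L[ℝ] Ed d →L[ℝ] ℝ :=
  fderiv ℝ (fun Q' => fderiv ℝ (fun Q'' => S (q, Q'')) Q') Q

/-- The symplectic twist map with `C²` generating function `S` has bounded rate:
`‖∂²_{qq} S‖_∞ + ‖∂²_{QQ} S‖_∞ < ∞`. -/
def BoundedRateGenFun (S : Ed d × Ed d → ℝ) : Prop :=
  ContDiff ℝ 2 S ∧ ∃ C : ℝ, ∀ q Q : Ed d, ‖hessqq S q Q‖ + ‖hessQQ S q Q‖ ≤ C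

/-- `γ : ℝ^d → ℝ^d` is `ℤ^d`-periodic. -/
def ZdPeriodic (γ : Ed d → Ed d) : Prop :=
  ∀ (m : Fin d → ℤ) (q : Ed d), γ (q + intVec d m) = γ q

/-- A function `G : ℝ^d → ℝ` is `ℤ^d`-periodic, i.e. is a function on `𝕋^d`. -/
def ZdPeriodicFun (G : Ed d → ℝ) : Prop :=
  ∀ (m : Fin d → ℤ) (q : Ed d), G (q + intVec d m) = G q

/-- The graph of `γ` is Lagrangian: `∫₀¹ γ(ν(t))·ν'(t) dt = 0` for every `C¹` loop `ν`. -/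
def IsLagrangianGraph (γ : Ed d → Ed d) : Prop :=
  ∀ ν : ℝ → Ed d, ContDiff ℝ 1 ν → (∀ t : ℝ, ν (t + 1) = ν t) →
    ∫ t in (0:ℝ)..1, pairing (γ (ν t)) (deriv ν t) = 0

/-- The graph of `γ` is an `(m, n)`-periodic graph of `F`: `F^n(q, γ(q)) = (q+m, γ(q))`. -/
def IsPeriodicGraph (F : Ed d × Ed d → Ed d × Ed d) (m : Fin d → ℤ) (n : ℕ)
    (γ : Ed d → Ed d) : Prop :=
  ∀ q : Ed d, F^[n] (q, γ q) = (q + intVec d m, γ q)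

/-- `m ∈ ℤ^d` and `n ∈ ℕ` are coprime. -/
def CoprimeVec (m : Fin d → ℤ) (n : ℕ) : Prop :=
  Nat.gcd (Finset.univ.gcd fun i => (m i).natAbs) n = 1

/-- The graph of `γ`, as a subset of `ℝ^d × ℝ^d`. -/
def graphSet (γ : Ed d → Ed d) : Set (Ed d × Ed d) := {x : Ed d × Ed d | x.2 = γ x.1}

/-- `F` admits a Lipschitz Lagrangian `(m,n)`-periodic graph. -/
def HasLipLagPeriodicGraph (F : Ed d × Ed d → Ed d × Ed d) (m : Fin d → ℤ) (n : ℕ) : Prop :=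
  ∃ γ : Ed d → Ed d, (∃ K : NNReal, LipschitzWith K γ) ∧ ZdPeriodic γ ∧
    IsLagrangianGraph γ ∧ IsPeriodicGraph F m n γ

/-- The symplectic twist map lifted by `F` satisfies the analyticity property: there is a
holomorphic diffeomorphism of `ℂ^d × ℂ^d` extending `F`, satisfying the twist condition
and admitting a holomorphic generating function. -/
def SatisfiesAnalyticityProperty (F : Ed d × Ed d → Ed d × Ed d) : Prop :=
  ∃ Fc : Cd d × Cd d → Cd d × Cd d,
    IsHolDiffeo Fc ∧
    (∀ q p : Ed d, Fc (complexify q, complexify p)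
        = (complexify (F (q, p)).1, complexify (F (q, p)).2)) ∧
    IsHolDiffeo (fun x : Cd d × Cd d => (x.1, (Fc x).1)) ∧
    ∃ Sc : Cd d × Cd d → ℂ, Differentiable ℂ Sc ∧
      (∀ (m : Fin d → ℤ) (q Q : Cd d), Sc (q + intVecC d m, Q + intVecC d m) = Sc (q, Q)) ∧
      (∀ q p v : Cd d, fderiv ℂ (fun q' => Sc (q', (Fc (q, p)).1)) q v = -(pairingC p v)) ∧
      (∀ q p v : Cd d,
        fderiv ℂ (fun Q' => Sc (q, Q')) (Fc (q, p)).1 v = pairingC (Fc (q, p)).2 v)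

/-- `G : 𝕋^d → ℝ` admits a holomorphic extension to `ℂ^d`. -/
def HasHolomorphicExtension (G : Ed d → ℝ) : Prop :=
  ∃ Gc : Cd d → ℂ, Differentiable ℂ Gc ∧ ∀ q : Ed d, Gc (complexify q) = (G q : ℂ)

/-- `F` is the lift of a completely integrable map `f(q,p) = (q + ∇ℓ₀(p), p)` where
`ℓ₀` is `C²` and `∇ℓ₀` is a `C¹` diffeomorphism of `ℝ^d`. -/
def CompletelyIntegrableLift (F : Ed d × Ed d → Ed d × Ed d) : Prop :=
  ∃ (ℓ : Ed d → ℝ) (g : Ed d → Ed d), ContDiff ℝ 2 ℓ ∧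
    (∀ p v : Ed d, fderiv ℝ ℓ p v = pairing (g p) v) ∧
    IsC1Diffeo g ∧ ∀ q p : Ed d, F (q, p) = (q + g p, p)

/-- The `ν`-th Fourier coefficient of a `ℤ^d`-periodic function `G : ℝ^d → ℝ`. -/
def fourierCoeffT (G : Ed d → ℝ) (ν : Fin d → ℤ) : ℂ :=
  ∫ q in {q : Ed d | ∀ i, q i ∈ Set.Icc (0:ℝ) 1},
    (G q : ℂ) * Complex.exp (-(2 * Real.pi * Complex.I) * ∑ i, (ν i : ℂ) * (q i : ℂ))

/-- The sequence `(x_j)_{j ∈ ℤ}` is action-minimizing for the generating function `S`. -/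
def IsMinimizingSeq (S : Ed d × Ed d → ℝ) (x : ℤ → Ed d) : Prop :=
  ∀ (k : ℤ) (N : ℕ) (w : ℕ → Ed d), w 0 = x k → w N = x (k + N) →
    ∑ j ∈ Finset.range N, S (x (k + j), x (k + j + 1)) ≤
      ∑ j ∈ Finset.range N, S (w j, w (j + 1))

/-- `x : ℤ → ℝ^d × ℝ^d` is a full orbit of `F`. -/
def IsFullOrbit (F : Ed d × Ed d → Ed d × Ed d) (x : ℤ → Ed d × Ed d) : Prop :=
  ∀ j : ℤ, x (j + 1) = F (x j)

/-- The orbit of `a` under `F` is action-minimizing (its projection is a minimizing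
sequence). -/
def OrbitMinimizing (F : Ed d × Ed d → Ed d × Ed d) (S : Ed d × Ed d → ℝ)
    (a : Ed d × Ed d) : Prop :=
  ∃ x : ℤ → Ed d × Ed d, x 0 = a ∧ IsFullOrbit F x ∧ IsMinimizingSeq S fun j => (x j).1

/-- The superlinearity condition `S(q,Q)/‖Q-q‖ → ∞` as `‖Q-q‖ → ∞`. -/
def SuperlinearGenFun (S : Ed d × Ed d → ℝ) : Prop :=
  ∀ A : ℝ, ∃ R : ℝ, ∀ q Q : Ed d, R ≤ ‖Q - q‖ → A * ‖Q - q‖ ≤ S (q, Q)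

/-- The determinant of `∂_p (π₁ ∘ F^n) (q, p)`. -/
def twistDet (F : Ed d × Ed d → Ed d × Ed d) (n : ℕ) (q p : Ed d) : ℝ :=
  LinearMap.det ((fderiv ℝ (fun p' => (F^[n] (q, p')).1) p : Ed d →L[ℝ] Ed d)
    : Ed d →ₗ[ℝ] Ed d)

/-- The set `A ⊆ ℝ` is infinite with points accumulating to `0`. -/
def InfiniteAccumulatingAtZero (A : Set ℝ) : Prop :=
  A.Infinite ∧ ∀ δ : ℝ, 0 < δ → ∃ ε ∈ A, ε ≠ 0 ∧ |ε| < δ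

/-! Strong positivity makes `Q ↦ ∂_q S(q, Q)` injective, so the map generated by `S + εG` is
`F_ε(q, p) = F(q, p + ε∇G(q))`. Hence `f(ε, q, p) = π₁ F_ε^n(q, p) - q` is jointly `C¹` and
`ℤ^d`-periodic in `q`, and a graph `γ₀` as in the statement for `ε₀` is a nondegenerate solution of
`f(ε₀, q, γ₀ q) = m`. The implicit function theorem, made uniform over a compact fundamental domain
of `ℤ^d` by the tube lemma, yields for `ε` near `ε₀` a unique solution `γ_ε` close to `γ₀`; by
uniqueness it is periodic and locally equal to the implicit function, hence `C¹`, and a periodic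
`C¹` map is Lipschitz. -/

open InnerProductSpace
open scoped Gradient

lemma pairing_eq_inner (a v : Ed d) : pairing a v = inner ℝ a v := by
  simp [pairing, PiLp.inner_apply, mul_comm]

lemma StronglyPositiveGenFun.positiveGenFun {S : Ed d × Ed d → ℝ}
    (hS : StronglyPositiveGenFun S) : PositiveGenFun S :=
  let ⟨hC, α, _, hα, _, hb⟩ := hS
  ⟨hC, α, hα, fun q Q v => (hb q Q v).2⟩

lemma fderiv_fst_apply_eq {S : Ed d × Ed d → ℝ} (hS : Differentiable ℝ S) (q Q v : Ed d) :
    fderiv ℝ (fun q' => S (q', Q)) q v = fderiv ℝ S (q, Q) (v, 0) := by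
  have : HasFDerivAt (fun q' => S (q', Q)) ((fderiv ℝ S (q, Q)).comp (.inl ℝ _ _)) q :=
    (hS (q, Q)).hasFDerivAt.comp q (hasFDerivAt_prodMk_left q Q)
  rw [this.fderiv]
  rfl

/-- Along `Q₁ + t (Q₂ - Q₁)`, the value of `∂_q S` on `Q₂ - Q₁` has derivative `mixedS < 0`. -/
theorem PositiveGenFun.injective_fderiv_fst {S : Ed d × Ed d → ℝ} (hS : PositiveGenFun S)
    (q : Ed d) : Injective fun Q => fderiv ℝ (fun q' => S (q', Q)) q := by
  obtain ⟨hC, α, hα, hmixed⟩ := hS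
  intro Q₁ Q₂ hQ
  by_contra hne
  set w := Q₂ - Q₁
  have hw : w ≠ 0 := sub_ne_zero.2 (Ne.symm hne)
  set h : Ed d → ℝ := fun Q => fderiv ℝ (fun q' => S (q', Q)) q w
  have hh : Differentiable ℝ h := by
    have : h = fun Q => fderiv ℝ S (q, Q) (w, 0) :=
      funext fun Q => fderiv_fst_apply_eq (hC.differentiable two_ne_zero) q Q w
    rw [this]
    exact (((hC.fderiv_right (by norm_num)).differentiable one_ne_zero).comp
      (differentiable_const q |>.prodMk differentiable_id)).clm_apply (differentiable_const _)
  have hderiv : ∀ t : ℝ, deriv (fun t : ℝ => h (Q₁ + t • w)) t < 0 := by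
    intro t
    have hline : HasDerivAt (fun t : ℝ => Q₁ + t • w) w t := by
      simpa using ((hasDerivAt_id t).smul_const w).const_add Q₁
    have : HasDerivAt (fun t : ℝ => h (Q₁ + t • w)) (fderiv ℝ h (Q₁ + t • w) w) t :=
      (hh _).hasFDerivAt.comp_hasDerivAt t hline
    rw [this.deriv]
    calc fderiv ℝ h (Q₁ + t • w) w = mixedS S q (Q₁ + t • w) w := rfl
      _ ≤ -α * ‖w‖ ^ 2 := hmixed _ _ _
      _ < 0 := by
        rw [neg_mul, neg_lt_zero]; exact mul_pos hα (pow_pos (norm_pos_iff.2 hw) 2)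
  have hanti := strictAnti_of_deriv_neg hderiv zero_lt_one
  have h01 : h (Q₁ + (1 : ℝ) • w) = h (Q₁ + (0 : ℝ) • w) := by
    simp only [one_smul, zero_smul, add_zero, w, add_sub_cancel, h]
    exact (congrFun (congrArg DFunLike.coe hQ) w).symm
  exact hanti.ne h01

lemma gradient_const_mul_apply {G : Ed d → ℝ} {q : Ed d} (hG : DifferentiableAt ℝ G q) (c : ℝ) :
    ∇ (fun q' => c * G q') q = c • ∇ G q := by
  refine HasGradientAt.gradient ?_
  rw [hasGradientAt_iff_hasFDerivAt, map_smul, toDual_gradient]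
  exact hG.hasFDerivAt.const_mul c

theorem IsGenFun.apply_eq_apply_add_gradient {F F' : Ed d × Ed d → Ed d × Ed d}
    {S : Ed d × Ed d → ℝ} {V : Ed d → ℝ} (hpos : PositiveGenFun S) (hV : Differentiable ℝ V)
    (hF : IsGenFun F S) (hF' : IsGenFun F' fun x => S x + V x.1) (q p : Ed d) :
    F' (q, p) = F (q, p + ∇ V q) := by
  have hS : Differentiable ℝ S := hpos.1.differentiable two_ne_zero
  have hQ : (F' (q, p)).1 = (F (q, p + ∇ V q)).1 := by
    refine hpos.injective_fderiv_fst q (ContinuousLinearMap.ext fun v => ?_)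
    have hdq := hF'.dq q p v
    dsimp only at hdq
    have hSq : DifferentiableAt ℝ (fun q' => S (q', (F' (q, p)).1)) q := by fun_prop
    rw [fderiv_fun_add hSq (hV q)] at hdq
    rw [add_apply, ← inner_gradient_left (f := V)] at hdq
    simp only [hF.dq, pairing_eq_inner, inner_add_left] at hdq ⊢
    linarith
  refine Prod.ext hQ (ext_inner_right ℝ fun v => ?_)
  have hdQ := hF'.dQ q p v
  dsimp only at hdQ
  rw [← pairing_eq_inner, ← pairing_eq_inner, ← hdQ, ← hF.dQ, fderiv_add_const, hQ]

lemma IsZdLift.iterate {F : Ed d × Ed d → Ed d × Ed d} (hF : IsZdLift F) (n : ℕ) :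
    IsZdLift F^[n] := by
  induction n with
  | zero => intro m q p; rfl
  | succ n ih =>
    intro m q p
    rw [iterate_succ_apply', iterate_succ_apply', ih, hF]

lemma ContDiff.uncurry_iterate {X E : Type*} [NormedAddCommGroup X] [NormedSpace ℝ X]
    [NormedAddCommGroup E] [NormedSpace ℝ E] {k : WithTop ℕ∞} {Φ : X → E → E}
    (hΦ : ContDiff ℝ k fun z : X × E => Φ z.1 z.2) (n : ℕ) :
    ContDiff ℝ k fun z : X × E => (Φ z.1)^[n] z.2 := by
  induction n with
  | zero => exact contDiff_snd
  | succ n ih =>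
    simp only [iterate_succ_apply']
    exact hΦ.comp (contDiff_fst.prodMk ih)

lemma exists_isCompact_forall_add_intVec_mem (d : ℕ) :
    ∃ K : Set (Ed d), IsCompact K ∧ ∀ q : Ed d, ∃ m : Fin d → ℤ, q + intVec d m ∈ K := by
  refine ⟨WithLp.toLp 2 '' Set.univ.pi fun _ => Icc (0 : ℝ) 1,
    (isCompact_univ_pi fun _ => isCompact_Icc).image (PiLp.continuous_toLp 2 _),
    fun q => ⟨fun i => -⌊q i⌋, WithLp.ofLp _, fun i _ => ?_, WithLp.toLp_ofLp _ _⟩⟩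
  have : q i + -⌊q i⌋ = Int.fract (q i) := by rw [Int.fract]; ring
  simp [intVec, this, Int.fract_nonneg, (Int.fract_lt_one _).le]

lemma ZdPeriodic.fderiv_add_intVec {γ : Ed d → Ed d} (hγ : ZdPeriodic γ) (m : Fin d → ℤ)
    (q : Ed d) : fderiv ℝ γ (q + intVec d m) = fderiv ℝ γ q := by
  rw [← fderiv_comp_add_right]
  exact congrArg (fderiv ℝ · q) (funext fun q' => hγ m q')

lemma ZdPeriodic.exists_lipschitzWith {γ : Ed d → Ed d} (hγ : ZdPeriodic γ)
    (hγC : ContDiff ℝ 1 γ) : ∃ K, LipschitzWith K γ := by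
  obtain ⟨K, hK, hKq⟩ := exists_isCompact_forall_add_intVec_mem d
  obtain ⟨C, hC⟩ := hK.exists_bound_of_continuousOn
    (hγC.continuous_fderiv one_ne_zero).continuousOn
  refine ⟨C.toNNReal, lipschitzWith_of_nnnorm_fderiv_le
    (hγC.differentiable one_ne_zero) fun q => ?_⟩
  obtain ⟨m, hm⟩ := hKq q
  rw [← hγ.fderiv_add_intVec m q]
  exact NNReal.le_toNNReal_of_coe_le (hC _ hm)

section Implicit

variable {W E X Q : Type*} [NormedAddCommGroup W] [NormedSpace ℝ W] [NormedAddCommGroup E]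
  [NormedSpace ℝ E] [NormedAddCommGroup X] [NormedSpace ℝ X] [NormedAddCommGroup Q]
  [NormedSpace ℝ Q]

def detPartialSnd (f : W × E → E) (v : W × E) : ℝ :=
  (fderiv ℝ f v ∘L ContinuousLinearMap.inr ℝ W E).det

lemma continuous_detPartialSnd {f : W × E → E} (hf : ContDiff ℝ 1 f) :
    Continuous (detPartialSnd f) :=
  ContinuousLinearMap.continuous_det.comp
    ((hf.continuous_fderiv one_ne_zero).clm_comp continuous_const)

lemma exists_implicitFunction [CompleteSpace W] [FiniteDimensional ℝ E] {f : W × E → E}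
    (hf : ContDiff ℝ 1 f) {u : W × E} (hu : detPartialSnd f u ≠ 0) :
    ∃ ψ : W → E, ContDiffAt ℝ 1 ψ u.1 ∧ ψ u.1 = u.2 ∧ (∀ᶠ w in 𝓝 u.1, f (w, ψ w) = f u) ∧
      ∀ᶠ v in 𝓝 u, f v = f u → ψ v.1 = v.2 := by
  have hinv : (fderiv ℝ f u ∘L ContinuousLinearMap.inr ℝ W E).IsInvertible :=
    ⟨_, ContinuousLinearMap.coe_toContinuousLinearEquivOfDetNeZero _ hu⟩
  refine ⟨_, hf.contDiffAt.contDiffAt_implicitFunction one_ne_zero hinv,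
    hf.contDiffAt.implicitFunction_apply_self one_ne_zero hinv,
    hf.contDiffAt.eventually_apply_implicitFunction one_ne_zero hinv, ?_⟩
  filter_upwards [hf.contDiffAt.eventually_apply_eq_iff_implicitFunction one_ne_zero hinv]
    with v hv using hv.1

lemma detPartialSnd_eq_det_fderiv {f : W × E → E} {w : W} {e : E}
    (hf : DifferentiableAt ℝ f (w, e)) :
    detPartialSnd f (w, e) = (fderiv ℝ (fun y => f (w, y)) e).det := by
  have : HasFDerivAt (fun y => f (w, y)) (fderiv ℝ f (w, e) ∘L .inr ℝ W E) e :=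
    hf.hasFDerivAt.comp e (hasFDerivAt_prodMk_right w e)
  rw [detPartialSnd, this.fderiv]

lemma detPartialSnd_add_intVec {f : (X × Ed d) × Ed d → Ed d}
    (hfper : ∀ m x q p, f ((x, q + intVec d m), p) = f ((x, q), p)) (m : Fin d → ℤ) (x : X)
    (q p : Ed d) : detPartialSnd f ((x, q + intVec d m), p) = detPartialSnd f ((x, q), p) := by
  have hshift : (fun v => f (v + ((0, intVec d m), 0))) = f := by
    funext ⟨⟨x', q'⟩, p'⟩
    simpa using hfper m x' q' p'
  have := fderiv_comp_add_right (𝕜 := ℝ) (f := f) (x := ((x, q), p)) ((0, intVec d m), 0)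
  rw [hshift, Prod.mk_add_mk, Prod.mk_add_mk, add_zero, add_zero] at this
  rw [detPartialSnd, detPartialSnd, this]

variable [CompleteSpace X] [CompleteSpace Q] [FiniteDimensional ℝ E]

/-- The tube radius is found by applying the tube lemma to the parameter `(x, r)` near `(x₀, 0)`. -/
theorem IsCompact.exists_pos_eventually_unique_solution {K : Set Q} (hK : IsCompact K)
    {f : (X × Q) × E → E} (hf : ContDiff ℝ 1 f) {x₀ : X} {γ₀ : Q → E} (hγ₀ : Continuous γ₀)
    {c : E} (hsol : ∀ q ∈ K, f ((x₀, q), γ₀ q) = c)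
    (hdet : ∀ q ∈ K, detPartialSnd f ((x₀, q), γ₀ q) ≠ 0) :
    ∃ ρ > 0, ∀ᶠ x in 𝓝 x₀, ∀ q ∈ K, ∀ p, dist p (γ₀ q) < ρ →
      detPartialSnd f ((x, q), p) ≠ 0 ∧
      ∀ p', dist p' (γ₀ q) < ρ → f ((x, q), p) = c → f ((x, q), p') = c → p = p' := by
  let P : X × ℝ → Q → Prop := fun y q => ∀ p, dist p (γ₀ q) < y.2 →
    detPartialSnd f ((y.1, q), p) ≠ 0 ∧
    ∀ p', dist p' (γ₀ q) < y.2 → f ((y.1, q), p) = c → f ((y.1, q), p') = c → p = p'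
  have hlocal : ∀ a ∈ K, ∀ᶠ z : (X × ℝ) × Q in 𝓝 ((x₀, 0), a), P z.1 z.2 := by
    intro a ha
    obtain ⟨ψ, -, -, -, hψ⟩ := exists_implicitFunction hf (hdet a ha)
    obtain ⟨ε, hε, hgood⟩ := Metric.eventually_nhds_iff.1
      (hψ.and ((continuous_detPartialSnd hf).continuousAt.eventually_ne (hdet a ha)))
    have hγa : ∀ᶠ z : (X × ℝ) × Q in 𝓝 ((x₀, 0), a), dist (γ₀ z.2) (γ₀ a) < ε / 2 :=
      ((hγ₀.comp continuous_snd).tendsto ((x₀, 0), a)).eventually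
        (Metric.ball_mem_nhds (γ₀ a) (half_pos hε))
    filter_upwards [hγa, Metric.ball_mem_nhds ((x₀, (0 : ℝ)), a) (half_pos hε)]
      with ⟨⟨x, r⟩, q⟩ hγq hz
    obtain ⟨⟨hx, hr⟩, hq⟩ : (dist x x₀ < ε / 2 ∧ |r| < ε / 2) ∧ dist q a < ε / 2 := by
      simpa [Metric.mem_ball, Prod.dist_eq] using hz
    have hnear : ∀ p, dist p (γ₀ q) < r → dist ((x, q), p) ((x₀, a), γ₀ a) < ε := by
      intro p hp
      have := dist_triangle p (γ₀ q) (γ₀ a)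
      have := le_abs_self r
      simp only [Prod.dist_eq, max_lt_iff]
      exact ⟨⟨by linarith, by linarith⟩, by linarith⟩
    intro p hp
    refine ⟨(hgood (hnear p hp)).2, fun p' hp' hfp hfp' => ?_⟩
    exact ((hgood (hnear p hp)).1 (by simpa [hsol a ha] using hfp)).symm.trans
      ((hgood (hnear p' hp')).1 (by simpa [hsol a ha] using hfp'))
  obtain ⟨δ, hδ, hP⟩ :=
    Metric.eventually_nhds_iff.1 (hK.eventually_forall_of_forall_eventually hlocal)
  refine ⟨δ / 2, half_pos hδ, Metric.eventually_nhds_iff.2 ⟨δ, hδ, fun x hx =>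
    hP (y := (x, δ / 2)) ?_⟩⟩
  simpa [Prod.dist_eq, abs_of_pos hδ, hδ] using hx

theorem IsCompact.eventually_exists_solution {K : Set Q} (hK : IsCompact K)
    {f : (X × Q) × E → E} (hf : ContDiff ℝ 1 f) {x₀ : X} {γ₀ : Q → E} (hγ₀ : Continuous γ₀)
    {c : E} (hsol : ∀ q ∈ K, f ((x₀, q), γ₀ q) = c)
    (hdet : ∀ q ∈ K, detPartialSnd f ((x₀, q), γ₀ q) ≠ 0) {ρ : ℝ} (hρ : 0 < ρ) :
    ∀ᶠ x in 𝓝 x₀, ∀ q ∈ K, ∃ p, dist p (γ₀ q) < ρ ∧ f ((x, q), p) = c := by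
  refine hK.eventually_forall_of_forall_eventually fun a ha => ?_
  obtain ⟨ψ, hψC, hψa, hψsol, -⟩ := exists_implicitFunction hf (hdet a ha)
  have hclose : ∀ᶠ w in 𝓝 (x₀, a), dist (ψ w) (γ₀ w.2) < ρ := by
    refine ContinuousAt.eventually_lt (f := fun w => dist (ψ w) (γ₀ w.2))
      (hψC.continuousAt.dist (hγ₀.comp continuous_snd).continuousAt) continuousAt_const ?_
    simpa [hψa] using hρ
  filter_upwards [hclose, hψsol] with w hw hsw
  exact ⟨ψ w, hw, by simpa [hsol a ha] using hsw⟩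

theorem contDiff_of_unique_solution {f : (X × Q) × E → E} (hf : ContDiff ℝ 1 f) {x : X}
    {γ γ₀ : Q → E} (hγ₀ : Continuous γ₀) {ρ : ℝ} {c : E} (hsol : ∀ q, f ((x, q), γ q) = c)
    (hdet : ∀ q, detPartialSnd f ((x, q), γ q) ≠ 0) (hclose : ∀ q, dist (γ q) (γ₀ q) < ρ)
    (huniq : ∀ q p, dist p (γ₀ q) < ρ → f ((x, q), p) = c → p = γ q) :
    ContDiff ℝ 1 γ := by
  refine contDiff_iff_contDiffAt.2 fun q₀ => ?_
  obtain ⟨ψ, hψC, hψq, hψsol, -⟩ := exists_implicitFunction hf (hdet q₀)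
  have hslice : ContDiffAt ℝ 1 (fun q => ψ (x, q)) q₀ :=
    hψC.comp q₀ (contDiffAt_const.prodMk contDiffAt_id)
  have hslice_tendsto : Tendsto (fun q : Q => (x, q)) (𝓝 q₀) (𝓝 (x, q₀)) :=
    (continuous_const.prodMk continuous_id).tendsto q₀
  have hclose' : ∀ᶠ q in 𝓝 q₀, dist (ψ (x, q)) (γ₀ q) < ρ :=
    hslice.continuousAt.dist hγ₀.continuousAt |>.eventually_lt continuousAt_const
      (by simpa [hψq] using hclose q₀)
  refine hslice.congr_of_eventuallyEq ?_
  filter_upwards [hclose', hslice_tendsto.eventually hψsol] with q hq hsq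
  exact (huniq q _ hq (by simpa [hsol q₀] using hsq)).symm

theorem eventually_exists_periodic_solution {f : (X × Ed d) × Ed d → Ed d}
    (hf : ContDiff ℝ 1 f) (hfper : ∀ m x q p, f ((x, q + intVec d m), p) = f ((x, q), p))
    {x₀ : X} {γ₀ : Ed d → Ed d} (hγ₀ : Continuous γ₀) (hγ₀per : ZdPeriodic γ₀) {c : Ed d}
    (hsol : ∀ q, f ((x₀, q), γ₀ q) = c) (hdet : ∀ q, detPartialSnd f ((x₀, q), γ₀ q) ≠ 0) :
    ∀ᶠ x in 𝓝 x₀, ∃ γ : Ed d → Ed d, ContDiff ℝ 1 γ ∧ ZdPeriodic γ ∧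
      ∀ q, f ((x, q), γ q) = c ∧ detPartialSnd f ((x, q), γ q) ≠ 0 := by
  obtain ⟨K, hK, hKq⟩ := exists_isCompact_forall_add_intVec_mem d
  obtain ⟨ρ, hρ, hunique⟩ := hK.exists_pos_eventually_unique_solution hf hγ₀
    (fun q _ => hsol q) (fun q _ => hdet q)
  filter_upwards [hunique, hK.eventually_exists_solution hf hγ₀ (fun q _ => hsol q)
    (fun q _ => hdet q) hρ] with x hunique hexists
  have hunique' : ∀ q p, dist p (γ₀ q) < ρ → detPartialSnd f ((x, q), p) ≠ 0 ∧
      ∀ p', dist p' (γ₀ q) < ρ → f ((x, q), p) = c → f ((x, q), p') = c → p = p' := by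
    intro q
    obtain ⟨m, hm⟩ := hKq q
    simpa only [hfper, hγ₀per m q, detPartialSnd_add_intVec hfper] using hunique _ hm
  have hexists' : ∀ q, ∃ p, dist p (γ₀ q) < ρ ∧ f ((x, q), p) = c := by
    intro q
    obtain ⟨m, hm⟩ := hKq q
    simpa only [hfper, hγ₀per m q] using hexists _ hm
  choose γ hγρ hγsol using hexists'
  have hγdet : ∀ q, detPartialSnd f ((x, q), γ q) ≠ 0 := fun q => (hunique' q _ (hγρ q)).1
  have hγunique : ∀ q p, dist p (γ₀ q) < ρ → f ((x, q), p) = c → p = γ q :=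
    fun q p hp hfp => (hunique' q p hp).2 _ (hγρ q) hfp (hγsol q)
  refine ⟨γ, contDiff_of_unique_solution hf hγ₀ hγsol hγdet hγρ hγunique, fun m q => ?_,
    fun q => ⟨hγsol q, hγdet q⟩⟩
  exact (hγunique _ _ (by rw [hγ₀per]; exact hγρ q) (by rw [hfper]; exact hγsol q)).symm

end Implicit

lemma contDiff_gradient {G : Ed d → ℝ} (hG : ContDiff ℝ 2 G) : ContDiff ℝ 1 (∇ G) :=
  (toDual ℝ (Ed d)).symm.contDiff.comp (hG.fderiv_right (by norm_num))

theorem IsGenFun.contDiff_uncurry_of_add_smul {F : Ed d × Ed d → Ed d × Ed d}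
    {Fε : ℝ → Ed d × Ed d → Ed d × Ed d} {S : Ed d × Ed d → ℝ} {G : Ed d → ℝ}
    (hF : IsGenFun F S) (hFC : ContDiff ℝ 1 F) (hpos : PositiveGenFun S) (hG : ContDiff ℝ 2 G)
    (hFε : ∀ ε, IsGenFun (Fε ε) fun x => S x + ε * G x.1) :
    ContDiff ℝ 1 fun z : ℝ × (Ed d × Ed d) => Fε z.1 z.2 := by
  have hGd : Differentiable ℝ G := hG.differentiable two_ne_zero
  have hformula : (fun z : ℝ × (Ed d × Ed d) => Fε z.1 z.2) =
      fun z => F (z.2.1, z.2.2 + z.1 • ∇ G z.2.1) := by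
    funext ⟨ε, q, p⟩
    rw [hF.apply_eq_apply_add_gradient (V := fun q => ε * G q) hpos (hGd.const_mul ε) (hFε ε),
      gradient_const_mul_apply (hGd q)]
  have hgrad := contDiff_gradient hG
  rw [hformula]
  fun_prop

theorem statement5_general (d : ℕ) (F : Ed d × Ed d → Ed d × Ed d) (S : Ed d × Ed d → ℝ)
    (G : Ed d → ℝ) (hGreg : ContDiff ℝ 2 G)
    (Fε : ℝ → Ed d × Ed d → Ed d × Ed d)
    (hFS : IsSymplecticTwistLift F S)
    (hfam : ∀ ε : ℝ, IsSymplecticTwistLift (Fε ε) fun x => S x + ε * G x.1)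
    (hpos : StronglyPositiveGenFun S)
    (m : Fin d → ℤ) (n : ℕ) :
    IsOpen {ε : ℝ | ∃ γ : Ed d → Ed d, (∃ K : NNReal, LipschitzWith K γ) ∧
      ZdPeriodic γ ∧ ∀ q : Ed d,
        ((Fε ε)^[n] (q, γ q)).1 = q + intVec d m ∧ twistDet (Fε ε) n q (γ q) ≠ 0} := by
  refine isOpen_iff_mem_nhds.2 fun ε₀ ⟨γ₀, ⟨_, hγ₀⟩, hγ₀per, hγ₀sol⟩ => ?_
  let f : (ℝ × Ed d) × Ed d → Ed d := fun v => ((Fε v.1.1)^[n] (v.1.2, v.2)).1 - v.1.2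
  have hf : ContDiff ℝ 1 f :=
    (((hFS.genfun.contDiff_uncurry_of_add_smul hFS.diffeo.1 hpos.positiveGenFun hGreg
      fun ε => (hfam ε).genfun).uncurry_iterate n).fst.comp
      ((contDiff_fst.fst).prodMk ((contDiff_fst.snd).prodMk contDiff_snd))).sub contDiff_fst.snd
  have hfper : ∀ m x q p, f ((x, q + intVec d m), p) = f ((x, q), p) := by
    intro m x q p
    simp only [f, ((hfam x).lift.iterate n) m q p, add_sub_add_right_eq_sub]
  have htwist : ∀ ε q p, detPartialSnd f ((ε, q), p) = twistDet (Fε ε) n q p := by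
    intro ε q p
    rw [detPartialSnd_eq_det_fderiv (hf.differentiable one_ne_zero _)]
    exact congrArg ContinuousLinearMap.det (fderiv_sub_const _)
  filter_upwards [eventually_exists_periodic_solution hf hfper hγ₀.continuous hγ₀per
    (c := intVec d m) (fun q => by simp [f, (hγ₀sol q).1])
    (fun q => htwist ε₀ q _ ▸ (hγ₀sol q).2)] with ε ⟨γ, hγC, hγper, hγ⟩
  refine ⟨γ, hγper.exists_lipschitzWith hγC, hγper, fun q => ⟨?_, htwist ε q _ ▸ (hγ q).2⟩⟩
  exact sub_eq_iff_eq_add'.1 (hγ q).1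

/-- Lemma 2.7 item (ii). For a strongly positive symplectic twist map
`f` with generating function `S`, `G ∈ C²(𝕋^d)` and the continuous family of lifts
`(F_ε)` of the twist maps generated by `S + εG`, for coprime `(m, n)` the set
`J*_{(m,n)}` of parameters `ε` admitting a Lipschitz `ℤ^d`-periodic graph contained in
the set of radially transformed points at which `F_ε^n` is a local twist is open. -/
theorem statement5 (d : ℕ) (F : Ed d × Ed d → Ed d × Ed d) (S : Ed d × Ed d → ℝ)
    (G : Ed d → ℝ) (hGreg : ContDiff ℝ 2 G) (hGper : ZdPeriodicFun G)
    (Fε : ℝ → Ed d × Ed d → Ed d × Ed d)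
    (hFS : IsSymplecticTwistLift F S)
    (hfam : ∀ ε : ℝ, IsSymplecticTwistLift (Fε ε) fun x => S x + ε * G x.1)
    (hcont : Continuous fun x : ℝ × (Ed d × Ed d) => Fε x.1 x.2)
    (hpos : StronglyPositiveGenFun S)
    (m : Fin d → ℤ) (n : ℕ) (hn : 0 < n) (hmn : CoprimeVec m n) :
    IsOpen {ε : ℝ | ∃ γ : Ed d → Ed d, (∃ K : NNReal, LipschitzWith K γ) ∧
      ZdPeriodic γ ∧ ∀ q : Ed d,
        ((Fε ε)^[n] (q, γ q)).1 = q + intVec d m ∧ twistDet (Fε ε) n q (γ q) ≠ 0} :=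
  statement5_general d F S G hGreg Fε hFS hfam hpos m n

end
end

section
/- Let f be a positive symplectic twist map of 𝕋^d×ℝ^d and let F be a lift of f. Then for every (m,n) ∈ ℤ^d×ℕ* and every q ∈ ℝ^d, there exists at most one p ∈ ℝ^d such that F^n(q,p) = (q+m,p) and the orbit of (q,p) under F is action-minimizing. -/
open Function Set Filter Topology MeasureTheory

noncomputable section

variable {d : ℕ}

/-! Two minimizing orbits whose projections meet at times `0` and `n` can be spliced at time
`n`: minimizers with common endpoints have the same action, so the spliced configuration
(first orbit up to time `n`, second one afterwards) is again minimizing. Its discrete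
Euler–Lagrange equation at time `n`, `∂₂S(q_{n-1}, q_n) + ∂₁S(q_n, q'_{n+1}) = 0`, reads
`p_n = p'_n` by the generating-function relations, and `p_n = p`, `p'_n = p'` by periodicity. -/

section Chains

variable {α : Type*} (S : α × α → ℝ)

def chainAction (u : ℕ → α) (N : ℕ) : ℝ :=
  ∑ j ∈ Finset.range N, S (u j, u (j + 1))

def IsMinimizingOn (u : ℕ → α) (N : ℕ) : Prop :=
  ∀ w : ℕ → α, w 0 = u 0 → w N = u N → chainAction S u N ≤ chainAction S w N

def splice (n : ℕ) (u u' : ℕ → α) : ℕ → α := fun j => if j < n then u j else u' j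

variable {S}

lemma chainAction_add (u : ℕ → α) (n k : ℕ) :
    chainAction S u (n + k) = chainAction S u n + chainAction S (fun j => u (n + j)) k := by
  simp only [chainAction, Finset.sum_range_add, add_assoc]

lemma IsMinimizingOn.chainAction_eq {u v : ℕ → α} {N : ℕ} (hu : IsMinimizingOn S u N)
    (hv : IsMinimizingOn S v N) (h0 : u 0 = v 0) (hN : u N = v N) :
    chainAction S u N = chainAction S v N :=
  le_antisymm (hu v h0.symm hN.symm) (hv u h0 hN)

lemma IsMinimizingOn.of_chainAction_le {u v : ℕ → α} {N : ℕ} (hu : IsMinimizingOn S u N)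
    (h0 : v 0 = u 0) (hN : v N = u N) (h : chainAction S v N ≤ chainAction S u N) :
    IsMinimizingOn S v N := fun w hw0 hwN =>
  h.trans (hu w (hw0.trans h0) (hwN.trans hN))

lemma splice_of_le {n j : ℕ} {u u' : ℕ → α} (hn : u n = u' n) (hj : j ≤ n) :
    splice n u u' j = u j := by
  unfold splice
  split_ifs with h
  · rfl
  · rw [show j = n by omega, hn]

lemma splice_of_ge {n j : ℕ} {u u' : ℕ → α} (hj : n ≤ j) : splice n u u' j = u' j :=
  if_neg (by omega)

lemma isMinimizingOn_splice {u u' : ℕ → α} {n k : ℕ} (hu : IsMinimizingOn S u n)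
    (hu'n : IsMinimizingOn S u' n) (hu' : IsMinimizingOn S u' (n + k)) (h0 : u 0 = u' 0)
    (hn : u n = u' n) : IsMinimizingOn S (splice n u u') (n + k) := by
  refine hu'.of_chainAction_le ?_ (splice_of_ge (by omega)) (le_of_eq ?_)
  · rw [splice_of_le hn (Nat.zero_le n), h0]
  have hhead : chainAction S (splice n u u') n = chainAction S u n :=
    Finset.sum_congr rfl fun j hj => by
      rw [Finset.mem_range] at hj
      rw [splice_of_le hn hj.le, splice_of_le hn hj]
  have htail : (fun j => splice n u u' (n + j)) = fun j => u' (n + j) :=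
    funext fun j => splice_of_ge (by omega)
  rw [chainAction_add, chainAction_add, hhead, htail, hu.chainAction_eq hu'n h0 hn]

lemma IsMinimizingOn.le_update {u : ℕ → α} {N i : ℕ} (hu : IsMinimizingOn S u N)
    (hi : i + 2 ≤ N) (c : α) :
    S (u i, u (i + 1)) + S (u (i + 1), u (i + 2)) ≤ S (u i, c) + S (c, u (i + 2)) := by
  set w := Function.update u (i + 1) c
  have hdiff : chainAction S w N - chainAction S u N
      = S (u i, c) + S (c, u (i + 2)) - (S (u i, u (i + 1)) + S (u (i + 1), u (i + 2))) := by
    rw [chainAction, chainAction, ← Finset.sum_sub_distrib,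
      Finset.sum_eq_add_of_mem i (i + 1) (Finset.mem_range.2 (by omega))
      (Finset.mem_range.2 (by omega)) (by omega)]
    · simp only [w, Function.update_self, Function.update_of_ne (show i ≠ i + 1 by omega),
        Function.update_of_ne (show i + 1 + 1 ≠ i + 1 by omega)]
      ring
    · intro j _ hj
      simp only [w, Function.update_of_ne hj.2, Function.update_of_ne (show j + 1 ≠ i + 1 by omega),
        sub_self]
  have := hu w (Function.update_of_ne (by omega) _ _) (Function.update_of_ne (by omega) _ _)
  linarith

end Chains

lemma fderiv_add_fderiv_eq_zero_of_forall_le {E : Type*} [NormedAddCommGroup E]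
    [NormedSpace ℝ E] {S : E × E → ℝ} {a b e : E} (hab : DifferentiableAt ℝ S (a, b))
    (hbe : DifferentiableAt ℝ S (b, e)) (h : ∀ c, S (a, b) + S (b, e) ≤ S (a, c) + S (c, e)) :
    fderiv ℝ (fun w => S (a, w)) b + fderiv ℝ (fun w => S (w, e)) b = 0 := by
  have hmin : IsLocalMin (fun c => S (a, c) + S (c, e)) b := Filter.Eventually.of_forall h
  have hdiff₁ : DifferentiableAt ℝ (fun w => S (a, w)) b :=
    hab.comp b ((differentiableAt_const a).prodMk differentiableAt_id)
  have hdiff₂ : DifferentiableAt ℝ (fun w => S (w, e)) b :=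
    hbe.comp b (differentiableAt_id.prodMk (differentiableAt_const e))
  rw [← fderiv_fun_add hdiff₁ hdiff₂]
  exact hmin.fderiv_eq_zero

lemma pairing_injective {p p' : Ed d} (h : ∀ v, pairing p v = pairing p' v) : p = p' := by
  ext i
  simpa [pairing, PiLp.single_apply] using h (EuclideanSpace.single i 1)

lemma OrbitMinimizing.isMinimizingOn {F : Ed d × Ed d → Ed d × Ed d} {S : Ed d × Ed d → ℝ}
    {a : Ed d × Ed d} (h : OrbitMinimizing F S a) (N : ℕ) :
    IsMinimizingOn S (fun j => (F^[j] a).1) N := by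
  obtain ⟨x, hx0, horb, hmin⟩ := h
  have hx : ∀ j : ℕ, x j = F^[j] a := by
    intro j
    induction j with
    | zero => simpa using hx0
    | succ k ih => rw [Nat.cast_succ, horb, ih, Function.iterate_succ_apply']
  intro w hw0 hwN
  have := hmin 0 N w (by simpa [hx0] using hw0) (by simpa [hx] using hwN)
  simp only [zero_add] at this
  refine le_of_eq_of_le (Finset.sum_congr rfl fun j _ => ?_) this
  rw [← Nat.cast_succ, hx, hx]

lemma OrbitMinimizing.snd_iterate_eq {F : Ed d × Ed d → Ed d × Ed d} {S : Ed d × Ed d → ℝ}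
    (hgen : IsGenFun F S) (hS : Differentiable ℝ S) {a b : Ed d × Ed d}
    (ha : OrbitMinimizing F S a) (hb : OrbitMinimizing F S b) (h0 : a.1 = b.1) {n : ℕ}
    (hn : (F^[n + 1] a).1 = (F^[n + 1] b).1) : (F^[n + 1] a).2 = (F^[n + 1] b).2 := by
  have hspl := isMinimizingOn_splice (ha.isMinimizingOn (n + 1)) (hb.isMinimizingOn (n + 1))
    (hb.isMinimizingOn (n + 1 + 1)) h0 hn
  have hEL := fderiv_add_fderiv_eq_zero_of_forall_le (hS _) (hS _) (hspl.le_update le_rfl)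
  rw [splice_of_le hn (by omega), splice_of_le hn le_rfl, splice_of_ge (by omega)] at hEL
  refine pairing_injective fun v => ?_
  have hdQ : fderiv ℝ (fun w => S ((F^[n] a).1, w)) (F^[n + 1] a).1 v
      = pairing (F^[n + 1] a).2 v := by
    rw [Function.iterate_succ_apply']
    exact hgen.dQ _ _ v
  have hdq : fderiv ℝ (fun w => S (w, (F^[n + 2] b).1)) (F^[n + 1] b).1 v
      = -pairing (F^[n + 1] b).2 v := by
    rw [Function.iterate_succ_apply' F (n + 1)]
    exact hgen.dq _ _ v
  have hELv := DFunLike.congr_fun hEL v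
  rw [add_apply, zero_apply, hdQ, hn, hdq] at hELv
  linarith

/-- Lemma A.5 of the paper. Let `f` be a positive symplectic twist
map of `𝕋^d × ℝ^d` with lift `F`. For every `(m, n) ∈ ℤ^d × ℕ*` and every `q ∈ ℝ^d`,
there exists at most one `p ∈ ℝ^d` such that `F^n(q, p) = (q + m, p)` and the orbit of
`(q, p)` is action-minimizing. -/
theorem statement15 (d : ℕ) (F : Ed d × Ed d → Ed d × Ed d) (S : Ed d × Ed d → ℝ)
    (hFS : IsSymplecticTwistLift F S) (hpos : PositiveGenFun S)
    (m : Fin d → ℤ) (n : ℕ) (hn : 0 < n) (q : Ed d) :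
    ∀ p p' : Ed d,
      F^[n] (q, p) = (q + intVec d m, p) → OrbitMinimizing F S (q, p) →
      F^[n] (q, p') = (q + intVec d m, p') → OrbitMinimizing F S (q, p') →
      p = p' := by
  intro p p' hp hmin hp' hmin'
  obtain ⟨k, rfl⟩ : ∃ k, n = k + 1 := ⟨n - 1, by omega⟩
  have hS : Differentiable ℝ S := hpos.1.differentiable (by norm_num)
  have := hmin.snd_iterate_eq hFS.genfun hS hmin' rfl (by rw [hp, hp'])
  rwa [hp, hp'] at this

end
end
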